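/- The cut rule is admissible in the product-free Lambek calculus in natural deduction form: if Φ,γ,Δ ⊢ β and Γ ⊢ γ are derivable (with Γ nonempty), then Φ,Γ,Δ ⊢ β is derivable. -/
import Mathlib


inductive OType (Pr : Type) where
  | atom : Pr → OType Pr
  | over : OType Pr → OType Pr → OType Pr   -- `over β α` is β/α
  | under : OType Pr → OType Pr → OType Pr  -- `under α β` is α\β
deriving DecidableEq

/-- The product-free Lambek calculus S_IE on sequents `Γ ⊢ β` with `Γ` a
nonempty word of oriented types. -/
inductive Der {Pr : Type} : List (OType Pr) → OType Pr → Prop where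
  | ax (α : OType Pr) : Der [α] α
  | introR {Γ : List (OType Pr)} {α β : OType Pr} :
      Γ ≠ [] → Der (Γ ++ [α]) β → Der Γ (.over β α)
  | introL {Γ : List (OType Pr)} {α β : OType Pr} :
      Γ ≠ [] → Der (α :: Γ) β → Der Γ (.under α β)
  | elimR {Γ Δ : List (OType Pr)} {α β : OType Pr} :
      Der Γ (.over β α) → Der Δ α → Der (Γ ++ Δ) β
  | elimL {Γ Δ : List (OType Pr)} {α β : OType Pr} :
      Der Γ (.under α β) → Der Δ α → Der (Δ ++ Γ) β

private lemma split3 {α : Type*} {A B Φ Δ : List α} {γ : α}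
    (h : A ++ B = Φ ++ γ :: Δ) :
    (∃ Φ₂, A = Φ ++ γ :: Φ₂ ∧ Δ = Φ₂ ++ B) ∨
    (∃ Δ₂, B = Δ₂ ++ γ :: Δ ∧ Φ = A ++ Δ₂) := by
  rcases List.append_eq_append_iff.mp h with ⟨a', ha, hb⟩ | ⟨c', hc, hd⟩
  · exact Or.inr ⟨a', hb, ha⟩
  · cases c' with
    | nil => exact Or.inr ⟨[], by simpa using hd.symm, by simpa using hc.symm⟩
    | cons x t =>
      obtain ⟨rfl, ht⟩ : x = γ ∧ Δ = t ++ B := by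
        have := hd; simp at this; exact ⟨this.1.symm, this.2⟩
      exact Or.inl ⟨t, by simpa using hc, ht⟩

private lemma subst {Pr : Type} {Ξ : List (OType Pr)} {β : OType Pr}
    (h : Der Ξ β) : ∀ Φ Δ Γ (γ : OType Pr), Ξ = Φ ++ γ :: Δ → Der Γ γ → Γ ≠ [] →
    Der (Φ ++ Γ ++ Δ) β := by
  induction h with
  | ax α =>
    intro Φ Δ Γ γ heq h₂ hΓ
    cases Φ with
    | nil =>
      simp at heq
      obtain ⟨rfl, rfl⟩ := heq
      simpa using h₂
    | cons x t => simp at heq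
  | introR hne h ih =>
    intro Φ Δ Γ γ heq h₂ hΓ
    subst heq
    rename_i αx βx
    apply Der.introR (by simp [hΓ])
    have := ih Φ (Δ ++ [αx]) Γ γ (by simp) h₂ hΓ
    simpa [List.append_assoc] using this
  | introL hne h ih =>
    intro Φ Δ Γ γ heq h₂ hΓ
    subst heq
    rename_i αx βx
    apply Der.introL (by simp [hΓ])
    have := ih (αx :: Φ) Δ Γ γ (by simp) h₂ hΓ
    simpa using this
  | elimR h1 h2 ih1 ih2 =>
    intro Φ Δ Γ γ heq h₂ hΓ
    rcases split3 heq with ⟨Φ₂, rfl, rfl⟩ | ⟨Δ₂, rfl, rfl⟩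
    · have := Der.elimR (ih1 Φ Φ₂ Γ γ rfl h₂ hΓ) h2
      simpa [List.append_assoc] using this
    · have := Der.elimR h1 (ih2 Δ₂ Δ Γ γ rfl h₂ hΓ)
      simpa [List.append_assoc] using this
  | elimL h1 h2 ih1 ih2 =>
    intro Φ Δ Γ γ heq h₂ hΓ
    rcases split3 heq with ⟨Φ₂, rfl, rfl⟩ | ⟨Δ₂, rfl, rfl⟩
    · have := Der.elimL h1 (ih2 Φ Φ₂ Γ γ rfl h₂ hΓ)
      simpa [List.append_assoc] using this
    · have := Der.elimL (ih1 Δ₂ Δ Γ γ rfl h₂ hΓ) h2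
      simpa [List.append_assoc] using this

/-- Cut is admissible in S_IE: if `Φ,γ,Δ ⊢ β` and `Γ ⊢ γ` are derivable with
`Γ` nonempty, then `Φ,Γ,Δ ⊢ β` is derivable. -/
theorem cut_admissible {Pr : Type} (Φ Δ Γ : List (OType Pr)) (γ β : OType Pr)
    (h₁ : Der (Φ ++ γ :: Δ) β) (h₂ : Der Γ γ) (hΓ : Γ ≠ []) :
    Der (Φ ++ Γ ++ Δ) β :=
  subst h₁ Φ Δ Γ γ rfl h₂ hΓ
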